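/- Every eigenvalue of the Hermitian matrix Q̄_N is at most 1; equivalently, the matrix I − Q̄_N is positive semidefinite. -/

import Mathlib

open Matrix Finset
open scoped ComplexOrder

variable {V E : Type*}

/-- The complex incidence matrix of a directed hypergraph with head sets `Hd` and
tail sets `Tl`: `1` on heads, `-i` on tails, `0` otherwise. -/
noncomputable def incB [DecidableEq V] (Hd Tl : E → Finset V) : Matrix V E ℂ :=
  Matrix.of fun v e => if v ∈ Hd e then 1 else if v ∈ Tl e then -Complex.I else 0

/-- The (weighted) degree of a vertex: sum of the weights of the hyperedges containing it. -/
noncomputable def vdeg [Fintype E] [DecidableEq V] (Hd Tl : E → Finset V) (w : E → ℝ)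
    (u : V) : ℝ :=
  ∑ e ∈ Finset.univ.filter (fun e => u ∈ Hd e ∪ Tl e), w e

/-- The degree (cardinality) of a hyperedge. -/
def edeg [DecidableEq V] (Hd Tl : E → Finset V) (e : E) : ℕ :=
  (Hd e ∪ Tl e).card

/-- The normalized Signless Directed Line-Graph Laplacian
`Q̄_N = D_e^{-1/2} W^{1/2} B* D_v^{-1} B W^{1/2} D_e^{-1/2}`. -/
noncomputable def QN [Fintype V] [Fintype E] [DecidableEq V] [DecidableEq E]
    (Hd Tl : E → Finset V) (w : E → ℝ) : Matrix E E ℂ :=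
  Matrix.diagonal (fun e => (((Real.sqrt (edeg Hd Tl e : ℝ))⁻¹ : ℝ) : ℂ)) *
    Matrix.diagonal (fun e => ((Real.sqrt (w e) : ℝ) : ℂ)) * (incB Hd Tl)ᴴ *
    Matrix.diagonal (fun u => (((vdeg Hd Tl w u)⁻¹ : ℝ) : ℂ)) * incB Hd Tl *
    Matrix.diagonal (fun e => ((Real.sqrt (w e) : ℝ) : ℂ)) *
    Matrix.diagonal (fun e => (((Real.sqrt (edeg Hd Tl e : ℝ))⁻¹ : ℝ) : ℂ))

/-- The Directed Line Graph Laplacian `𝕃_N = I - Q̄_N`. -/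
noncomputable def LN [Fintype V] [Fintype E] [DecidableEq V] [DecidableEq E]
    (Hd Tl : E → Finset V) (w : E → ℝ) : Matrix E E ℂ :=
  1 - QN Hd Tl w


/-! With `A = D_v^{-1/2} B W^{1/2} D_e^{-1/2}` we have `Q̄_N = Aᴴ A`, so it suffices that `A` is a
contraction. Every entry of `B` has modulus at most `1`, so Cauchy–Schwarz gives
`|(Ax)_v|² ≤ d(v)⁻¹ (∑_{e ∋ v} w(e)) (∑_{e ∋ v} |x_e|² / δ(e)) = ∑_{e ∋ v} |x_e|² / δ(e)`,
and summing over `v` counts each hyperedge `e` exactly `δ(e)` times. -/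

lemma star_dotProduct_self_eq_sum_norm_sq {n : Type*} [Fintype n] (x : n → ℂ) :
    star x ⬝ᵥ x = ((∑ i, ‖x i‖ ^ 2 : ℝ) : ℂ) := by
  push_cast
  exact Finset.sum_congr rfl fun i _ => Complex.conj_mul' (x i)

lemma Matrix.posSemidef_one_sub_conjTranspose_mul_self {m n : Type*} [Fintype m] [Fintype n]
    [DecidableEq n] {A : Matrix m n ℂ}
    (hA : ∀ x, ∑ i, ‖(A *ᵥ x) i‖ ^ 2 ≤ ∑ j, ‖x j‖ ^ 2) : (1 - Aᴴ * A).PosSemidef := by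
  refine .of_dotProduct_mulVec_nonneg
    (isHermitian_one.sub (posSemidef_conjTranspose_mul_self A).isHermitian) fun x => ?_
  have hquad : star x ⬝ᵥ (Aᴴ * A) *ᵥ x = star (A *ᵥ x) ⬝ᵥ A *ᵥ x := by
    rw [← mulVec_mulVec, dotProduct_mulVec, vecMul_conjTranspose, star_star]
  rw [sub_mulVec, dotProduct_sub, one_mulVec, hquad, star_dotProduct_self_eq_sum_norm_sq,
    star_dotProduct_self_eq_sum_norm_sq, ← Complex.ofReal_sub, Complex.zero_le_real, sub_nonneg]
  exact hA x

lemma Matrix.exists_real_le_one_of_posSemidef_one_sub {n : Type*} [Fintype n] [DecidableEq n]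
    {Q : Matrix n n ℂ} (hQ : (1 - Q).PosSemidef) {μ : ℂ} (hμ : μ ∈ spectrum ℂ Q) :
    ∃ r : ℝ, μ = r ∧ r ≤ 1 := by
  have hmem : 1 - μ ∈ spectrum ℂ (1 - Q) := by
    rw [← map_one (algebraMap ℂ (Matrix n n ℂ)), ← spectrum.singleton_sub_eq]
    exact Set.sub_mem_sub rfl hμ
  obtain ⟨hre, him⟩ := Complex.nonneg_iff.1
    ((posSemidef_iff_isHermitian_and_spectrum_nonneg.1 hQ).2 hmem)
  refine ⟨μ.re, Complex.ext rfl ?_, by simpa using hre⟩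
  simpa [eq_comm] using him

lemma Finset.sum_sum_filter_mem {α ι M : Type*} [Fintype α] [Fintype ι] [DecidableEq α]
    [AddCommMonoid M] (s : ι → Finset α) (f : ι → M) :
    ∑ a, ∑ i ∈ univ.filter (fun i => a ∈ s i), f i = ∑ i, #(s i) • f i := by
  rw [Finset.sum_comm' (t' := univ) (s' := s) (by simp)]
  simp

lemma norm_sum_mul_sq_le {ι : Type*} (s : Finset ι) {b : ι → ℂ} (hb : ∀ i, ‖b i‖ ≤ 1)
    (a : ι → ℝ) (y : ι → ℂ) :
    ‖∑ i ∈ s, b i * (a i * y i)‖ ^ 2 ≤ (∑ i ∈ s, a i ^ 2) * ∑ i ∈ s, ‖y i‖ ^ 2 := by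
  have htri : ‖∑ i ∈ s, b i * (a i * y i)‖ ≤ ∑ i ∈ s, |a i| * ‖y i‖ := by
    refine norm_sum_le_of_le s fun i _ => ?_
    rw [norm_mul, norm_mul, Complex.norm_real, Real.norm_eq_abs]
    exact mul_le_of_le_one_left (by positivity) (hb i)
  calc ‖∑ i ∈ s, b i * (a i * y i)‖ ^ 2 ≤ (∑ i ∈ s, |a i| * ‖y i‖) ^ 2 := by gcongr
    _ ≤ (∑ i ∈ s, |a i| ^ 2) * ∑ i ∈ s, ‖y i‖ ^ 2 := sum_mul_sq_le_sq_mul_sq s _ _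
    _ = (∑ i ∈ s, a i ^ 2) * ∑ i ∈ s, ‖y i‖ ^ 2 := by simp only [sq_abs]

section Hypergraph

variable [DecidableEq V] (Hd Tl : E → Finset V)

lemma norm_incB_le_one (v : V) (e : E) : ‖incB Hd Tl v e‖ ≤ 1 := by
  rw [incB, of_apply]
  split_ifs <;> simp

lemma incB_eq_zero_of_notMem {v : V} {e : E} (h : v ∉ Hd e ∪ Tl e) : incB Hd Tl v e = 0 := by
  rw [mem_union, not_or] at h
  simp [incB, h.1, h.2]

variable [Fintype E] (w : E → ℝ)

lemma vdeg_nonneg (hw : ∀ e, 0 ≤ w e) (u : V) : 0 ≤ vdeg Hd Tl w u :=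
  sum_nonneg fun e _ => hw e

variable [Fintype V] [DecidableEq E]

noncomputable def normIncidence : Matrix V E ℂ :=
  diagonal (fun u => (((Real.sqrt (vdeg Hd Tl w u))⁻¹ : ℝ) : ℂ)) * incB Hd Tl *
    diagonal (fun e => ((Real.sqrt (w e) : ℝ) : ℂ)) *
    diagonal (fun e => (((Real.sqrt (edeg Hd Tl e : ℝ))⁻¹ : ℝ) : ℂ))

lemma QN_eq_conjTranspose_mul_self (hw : ∀ e, 0 ≤ w e) :
    QN Hd Tl w = (normIncidence Hd Tl w)ᴴ * normIncidence Hd Tl w := by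
  have hsq : diagonal (fun u => (((vdeg Hd Tl w u)⁻¹ : ℝ) : ℂ)) =
      diagonal (fun u => (((Real.sqrt (vdeg Hd Tl w u))⁻¹ : ℝ) : ℂ)) *
        diagonal (fun u => (((Real.sqrt (vdeg Hd Tl w u))⁻¹ : ℝ) : ℂ)) := by
    rw [diagonal_mul_diagonal]
    congr 1
    funext u
    rw [← Complex.ofReal_mul, ← mul_inv, Real.mul_self_sqrt (vdeg_nonneg Hd Tl w hw u)]
  simp only [QN, normIncidence, conjTranspose_mul, diagonal_conjTranspose, hsq, Matrix.mul_assoc]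
  simp [Pi.star_def]

lemma normIncidence_mulVec_apply (x : E → ℂ) (v : V) :
    (normIncidence Hd Tl w *ᵥ x) v = (((Real.sqrt (vdeg Hd Tl w v))⁻¹ : ℝ) : ℂ) *
      ∑ e ∈ univ.filter (fun e => v ∈ Hd e ∪ Tl e),
        incB Hd Tl v e *
          (Real.sqrt (w e) * ((((Real.sqrt (edeg Hd Tl e : ℝ))⁻¹ : ℝ) : ℂ) * x e)) := by
  simp only [normIncidence, ← mulVec_mulVec, mulVec_diagonal]
  congr 1
  rw [sum_filter_of_ne fun e _ he => ?_]
  · rw [mulVec, dotProduct]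
    simp only [mulVec_diagonal]
  · by_contra hv
    simp [incB_eq_zero_of_notMem Hd Tl hv] at he

lemma norm_normIncidence_mulVec_sq_le (hw : ∀ e, 0 ≤ w e) (x : E → ℂ) (v : V) :
    ‖(normIncidence Hd Tl w *ᵥ x) v‖ ^ 2 ≤
      ∑ e ∈ univ.filter (fun e => v ∈ Hd e ∪ Tl e), ‖x e‖ ^ 2 / edeg Hd Tl e := by
  set s := univ.filter (fun e => v ∈ Hd e ∪ Tl e)
  have hd := vdeg_nonneg Hd Tl w hw v
  calc ‖(normIncidence Hd Tl w *ᵥ x) v‖ ^ 2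
      = (Real.sqrt (vdeg Hd Tl w v))⁻¹ ^ 2 * ‖∑ e ∈ s, incB Hd Tl v e *
          (Real.sqrt (w e) * ((((Real.sqrt (edeg Hd Tl e : ℝ))⁻¹ : ℝ) : ℂ) * x e))‖ ^ 2 := by
        rw [normIncidence_mulVec_apply, norm_mul, mul_pow, Complex.norm_real, Real.norm_eq_abs,
          sq_abs]
    _ ≤ (Real.sqrt (vdeg Hd Tl w v))⁻¹ ^ 2 * ((∑ e ∈ s, Real.sqrt (w e) ^ 2) *
          ∑ e ∈ s, ‖(((Real.sqrt (edeg Hd Tl e : ℝ))⁻¹ : ℝ) : ℂ) * x e‖ ^ 2) := by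
        gcongr
        exact norm_sum_mul_sq_le s (norm_incB_le_one Hd Tl v) _ _
    _ = (vdeg Hd Tl w v)⁻¹ * vdeg Hd Tl w v * ∑ e ∈ s, ‖x e‖ ^ 2 / edeg Hd Tl e := by
        have hw2 : ∑ e ∈ s, Real.sqrt (w e) ^ 2 = vdeg Hd Tl w v :=
          sum_congr rfl fun e _ => Real.sq_sqrt (hw e)
        have hx2 (e : E) : ‖(((Real.sqrt (edeg Hd Tl e : ℝ))⁻¹ : ℝ) : ℂ) * x e‖ ^ 2 =
            ‖x e‖ ^ 2 / edeg Hd Tl e := by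
          rw [norm_mul, mul_pow, Complex.norm_real, Real.norm_eq_abs, sq_abs, inv_pow,
            Real.sq_sqrt (Nat.cast_nonneg _), inv_mul_eq_div]
        simp only [hw2, hx2, inv_pow, Real.sq_sqrt hd, mul_assoc]
    _ ≤ ∑ e ∈ s, ‖x e‖ ^ 2 / edeg Hd Tl e :=
        mul_le_of_le_one_left (by positivity) inv_mul_le_one

lemma sum_norm_normIncidence_mulVec_sq_le (hw : ∀ e, 0 ≤ w e) (x : E → ℂ) :
    ∑ v, ‖(normIncidence Hd Tl w *ᵥ x) v‖ ^ 2 ≤ ∑ e, ‖x e‖ ^ 2 :=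
  calc ∑ v, ‖(normIncidence Hd Tl w *ᵥ x) v‖ ^ 2
      ≤ ∑ v, ∑ e ∈ univ.filter (fun e => v ∈ Hd e ∪ Tl e), ‖x e‖ ^ 2 / edeg Hd Tl e :=
        sum_le_sum fun v _ => norm_normIncidence_mulVec_sq_le Hd Tl w hw x v
    _ = ∑ e, (edeg Hd Tl e : ℝ) * (‖x e‖ ^ 2 / edeg Hd Tl e) := by
        simp only [sum_sum_filter_mem, nsmul_eq_mul, edeg]
    _ ≤ ∑ e, ‖x e‖ ^ 2 := sum_le_sum fun e _ => by
        rw [mul_div_left_comm]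
        exact mul_le_of_le_one_right (by positivity) (div_self_le_one _)

end Hypergraph

theorem stmt5_general {V E : Type*} [Fintype V] [Fintype E] [DecidableEq V] [DecidableEq E]
    (Hd Tl : E → Finset V)
    (w : E → ℝ) (hw : ∀ e, 0 < w e) :
    (∀ μ ∈ spectrum ℂ (QN Hd Tl w), ∃ r : ℝ, μ = (r : ℂ) ∧ r ≤ 1) ∧
      ((1 : Matrix E E ℂ) - QN Hd Tl w).PosSemidef := by
  have hw' : ∀ e, 0 ≤ w e := fun e => (hw e).le
  have hPSD : (1 - QN Hd Tl w).PosSemidef := by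
    rw [QN_eq_conjTranspose_mul_self Hd Tl w hw']
    exact posSemidef_one_sub_conjTranspose_mul_self
      (sum_norm_normIncidence_mulVec_sq_le Hd Tl w hw')
  exact ⟨fun μ hμ => exists_real_le_one_of_posSemidef_one_sub hPSD hμ, hPSD⟩

/-- Every eigenvalue of the Hermitian matrix `Q̄_N` is (a real number) at most 1;
equivalently, `I - Q̄_N` is positive semidefinite. -/
theorem stmt5 {V E : Type*} [Fintype V] [Fintype E] [DecidableEq V] [DecidableEq E]
    (Hd Tl : E → Finset V)
    (hdisj : ∀ e, Disjoint (Hd e) (Tl e))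
    (hne : ∀ e, (Hd e ∪ Tl e).Nonempty)
    (w : E → ℝ) (hw : ∀ e, 0 < w e)
    (hd : ∀ u, 0 < vdeg Hd Tl w u) :
    (∀ μ ∈ spectrum ℂ (QN Hd Tl w), ∃ r : ℝ, μ = (r : ℂ) ∧ r ≤ 1) ∧
      ((1 : Matrix E E ℂ) - QN Hd Tl w).PosSemidef :=
  stmt5_general Hd Tl w hw
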